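/- Let Γ be a topologically finitely generated profinite group with positive rank gradient, let n be a natural number, and let H₁, …, Hₙ be topologically finitely generated closed subgroups of infinite index in Γ. Then the normalized Haar measure of the product set H₁H₂⋯Hₙ in Γ is zero. -/

import Mathlib

open scoped Pointwise

/-- `d(H)`: the smallest cardinality of a topological generating set of `H`. -/
noncomputable def topRank {Γ : Type*} [Group Γ] [TopologicalSpace Γ] [IsTopologicalGroup Γ]
    (H : Subgroup Γ) : ℕ :=
  sInf {n : ℕ | ∃ S : Finset Γ, S.card = n ∧ (S : Set Γ) ⊆ (H : Set Γ) ∧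
    (Subgroup.closure (S : Set Γ)).topologicalClosure = H}

/-- The rank gradient `∇Γ = inf (d(U) - 1)/[Γ : U]` over open subgroups `U`. -/
noncomputable def topRankGradient (Γ : Type*) [Group Γ] [TopologicalSpace Γ]
    [IsTopologicalGroup Γ] : ℝ :=
  sInf {r : ℝ | ∃ U : Subgroup Γ, IsOpen (U : Set Γ) ∧
    r = ((topRank U : ℝ) - 1) / (U.index : ℝ)}

/-- A subgroup is topologically finitely generated if it is the closure of the subgroup
generated by some finite subset. -/
def TopFG {Γ : Type*} [Group Γ] [TopologicalSpace Γ] [IsTopologicalGroup Γ]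
    (H : Subgroup Γ) : Prop :=
  ∃ S : Finset Γ, (S : Set Γ) ⊆ (H : Set Γ) ∧
    (Subgroup.closure (S : Set Γ)).topologicalClosure = H

/-- The product set `H₁H₂⋯Hₙ`. -/
def productSet {G : Type*} [Group G] {n : ℕ} (H : Fin n → Subgroup G) : Set G :=
  {g : G | ∃ f : Fin n → G, (∀ i, f i ∈ H i) ∧ g = (List.ofFn f).prod}


/-!
Suppose `μ (H₁ ⋯ Hₙ) > 0` and let `Sᵢ` be finite topological generating sets of the `Hᵢ`. Since
each `Hᵢ` is closed of infinite index, there is an open normal subgroup `M` with `[Γ : HᵢM] ≥ k`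
for all `i`, and by Schreier `Hᵢ ∩ M` is topologically generated by a set `Tᵢ` of at most
`|Sᵢ| [Hᵢ : Hᵢ ∩ M] ≤ |Sᵢ| [Γ : M] / k` elements. Covering each `Hᵢ` by finitely many cosets of
`Hᵢ ∩ M` shows that some product of conjugates `(Hᵢ ∩ M)^σᵢ` still has positive measure, hence so
does the closed subgroup `W ≤ M` topologically generated by the conjugated `Tᵢ`; by Steinhaus `W`
is open. Then `∇Γ [Γ : M] ≤ ∇Γ [Γ : W] < d(W) ≤ Σ |Sᵢ| [Γ : M] / k`, which fails for
`k > Σ |Sᵢ| / ∇Γ`.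
-/

open MeasureTheory

section ProductSet

variable {G : Type*} [Group G]

lemma productSet_zero (H : Fin 0 → Subgroup G) : productSet H = {1} := by
  ext g
  constructor
  · rintro ⟨f, -, rfl⟩
    simp
  · rintro rfl
    exact ⟨Fin.elim0, fun i => i.elim0, by simp⟩

lemma productSet_succ {n : ℕ} (H : Fin (n + 1) → Subgroup G) :
    productSet H = (H 0 : Set G) * productSet (fun i => H i.succ) := by
  ext g
  constructor
  · rintro ⟨f, hf, rfl⟩
    rw [List.ofFn_succ, List.prod_cons]
    exact Set.mul_mem_mul (hf 0) ⟨fun i => f i.succ, fun i => hf i.succ, rfl⟩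
  · rintro ⟨a, ha, b, ⟨f, hf, rfl⟩, rfl⟩
    refine ⟨Fin.cons a f, Fin.cases ha hf, ?_⟩
    simp [List.ofFn_succ]

lemma productSet_subset {n : ℕ} {H : Fin n → Subgroup G} {W : Subgroup G}
    (h : ∀ i, H i ≤ W) : productSet H ⊆ W := by
  rintro g ⟨f, hf, rfl⟩
  refine W.list_prod_mem fun x hx => ?_
  obtain ⟨i, rfl⟩ := List.mem_ofFn.1 hx
  exact h i (hf i)

/-- Pushing the coset representatives of the factors to the left conjugates the remaining
factors: `(c k) (p b) = (c p) ((p⁻¹ k p) b)`. -/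
lemma productSet_subset_iUnion_smul_productSet_conj {n : ℕ} {J K : Fin n → Subgroup G}
    {R : Fin n → Finset G} (hcov : ∀ i, (J i : Set G) ⊆ ⋃ c ∈ R i, c • (K i : Set G)) :
    ∃ P : Finset (G × (Fin n → G)),
      productSet J ⊆ ⋃ p ∈ P, p.1 • productSet (fun i => MulAut.conj (p.2 i) • K i) := by
  classical
  induction n with
  | zero => exact ⟨{(1, 1)}, by simp [productSet_zero]⟩
  | succ n ih =>
    obtain ⟨P, hP⟩ := ih (fun i => hcov i.succ)
    refine ⟨(R 0 ×ˢ P).image fun q => (q.1 * q.2.1, Fin.cons q.2.1⁻¹ q.2.2), ?_⟩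
    rw [productSet_succ]
    rintro _ ⟨a, ha, b, hb, rfl⟩
    obtain ⟨c, hc, k, hk, rfl⟩ : ∃ c ∈ R 0, ∃ k ∈ K 0, c * k = a := by
      simpa [Set.mem_smul_set] using hcov 0 ha
    obtain ⟨p, hp, b', hb', rfl⟩ : ∃ p ∈ P,
        ∃ b' ∈ productSet (fun i => MulAut.conj (p.2 i) • K i.succ), p.1 * b' = b := by
      simpa [Set.mem_smul_set] using hP hb
    refine Set.mem_biUnion (x := (c * p.1, Fin.cons p.1⁻¹ p.2))
      (Finset.mem_image.2 ⟨(c, p), Finset.mem_product.2 ⟨hc, hp⟩, rfl⟩)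
      ⟨p.1⁻¹ * k * p.1 * b', ?_, by simp only [smul_eq_mul]; group⟩
    rw [productSet_succ]
    refine Set.mul_mem_mul ?_ hb'
    have hk' : MulAut.conj p.1⁻¹ • k ∈ MulAut.conj p.1⁻¹ • K 0 :=
      Subgroup.smul_mem_pointwise_smul _ _ _ hk
    rwa [MulAut.smul_def, MulAut.conj_apply, inv_inv] at hk'

end ProductSet

section Index

variable {G : Type*} [Group G]

lemma Subgroup.relIndex_mul_index_sup (H M : Subgroup G) [M.Normal] :
    M.relIndex H * (H ⊔ M).index = M.index := by
  rw [← relIndex_sup_right H M]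
  exact M.relIndex_mul_index le_sup_right

lemma Subgroup.exists_finset_subset_iUnion_smul_inf (H M : Subgroup G) [M.FiniteIndex] :
    ∃ R : Finset G, (H : Set G) ⊆ ⋃ c ∈ R, c • ((H ⊓ M : Subgroup G) : Set G) := by
  classical
  have : Fintype (H ⧸ M.subgroupOf H) := Fintype.ofFinite _
  refine ⟨Finset.univ.image fun q : H ⧸ M.subgroupOf H => ((q.out : H) : G), fun x hx => ?_⟩
  obtain ⟨m, hm⟩ := QuotientGroup.mk_out_eq_mul (M.subgroupOf H) ⟨x, hx⟩
  refine Set.mem_biUnion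
    (Finset.mem_image_of_mem _ (Finset.mem_univ (QuotientGroup.mk ⟨x, hx⟩)))
    ⟨((m : H) : G)⁻¹, Subgroup.mem_inf.2 ⟨inv_mem (m : H).2, inv_mem m.2⟩, ?_⟩
  rw [hm]
  simp [smul_eq_mul]

lemma Subgroup.exists_finset_closure_eq_inf_card_le (M : Subgroup G) [M.FiniteIndex]
    (S : Finset G) :
    ∃ T : Finset G, closure (T : Set G) = closure S ⊓ M ∧
      T.card ≤ M.relIndex (closure S) * S.card := by
  classical
  set A := closure (S : Set G)
  let S' : Finset A := S.preimage (↑) Subtype.val_injective.injOn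
  have hS' : closure (S' : Set A) = ⊤ := by
    rw [Finset.coe_preimage]
    exact closure_closure_coe_preimage
  obtain ⟨T', hT'card, hT'⟩ := (M.subgroupOf A).exists_finset_card_le_mul hS'
  refine ⟨T'.image (A.subtype.comp (M.subgroupOf A).subtype), ?_, ?_⟩
  · rw [Finset.coe_image, ← MonoidHom.map_closure, hT', ← map_map, ← MonoidHom.range_eq_map,
      range_subtype, subgroupOf_map_subtype, inf_comm]
  · calc _ ≤ T'.card := Finset.card_image_le
      _ ≤ M.relIndex A * S'.card := hT'card
      _ ≤ M.relIndex A * S.card := by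
        gcongr
        rw [Finset.card_preimage]
        exact Finset.card_filter_le _ _

end Index

section Topology

variable {G : Type*} [Group G] [TopologicalSpace G] [IsTopologicalGroup G]

instance : Nonempty (OpenNormalSubgroup G) := ⟨⟨⊤, Subgroup.normal_top⟩⟩

lemma Subgroup.topologicalClosure_inf_of_isOpen (A : Subgroup G) {M : Subgroup G}
    (hM : IsOpen (M : Set G)) : (A ⊓ M).topologicalClosure = A.topologicalClosure ⊓ M := by
  apply SetLike.coe_injective
  rw [topologicalClosure_coe, coe_inf, coe_inf, topologicalClosure_coe]
  refine subset_antisymm ?_ hM.closure_inter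
  calc _root_.closure ((A : Set G) ∩ M) ⊆ _root_.closure A ∩ _root_.closure M :=
        closure_inter_subset_inter_closure _ _
    _ = _root_.closure A ∩ M := by rw [(M.isClosed_of_isOpen hM).closure_eq]

lemma exists_finset_topologicalClosure_eq_inf_card_le {H M : Subgroup G} [M.FiniteIndex]
    (hM : IsOpen (M : Set G)) {S : Finset G}
    (hS : (Subgroup.closure (S : Set G)).topologicalClosure = H) :
    ∃ T : Finset G, (Subgroup.closure (T : Set G)).topologicalClosure = H ⊓ M ∧
      T.card ≤ M.relIndex H * S.card := by
  obtain ⟨T, hT, hcard⟩ := M.exists_finset_closure_eq_inf_card_le S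
  refine ⟨T, by rw [hT, Subgroup.topologicalClosure_inf_of_isOpen _ hM, hS], hcard.trans ?_⟩
  gcongr
  exact Subgroup.relIndex_le_of_le_right (hS ▸ Subgroup.le_topologicalClosure _)
    M.isFiniteRelIndex_of_finiteIndex.relIndex_ne_zero

lemma topRank_le_card {U : Subgroup G} {T : Finset G}
    (hT : (Subgroup.closure (T : Set G)).topologicalClosure = U) : topRank U ≤ T.card :=
  Nat.sInf_le ⟨T, rfl, hT ▸ Subgroup.subset_closure.trans (Subgroup.le_topologicalClosure _), hT⟩

lemma Subgroup.finiteIndex_of_isOpen [CompactSpace G] {U : Subgroup G}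
    (hU : IsOpen (U : Set G)) : U.FiniteIndex :=
  have := U.quotient_finite_of_isOpen hU
  finiteIndex_of_finite_quotient

lemma topRankGradient_mul_index_le [CompactSpace G] {U : Subgroup G} (hU : IsOpen (U : Set G)) :
    topRankGradient G * U.index ≤ topRank U - 1 := by
  have hU₀ := (Subgroup.finiteIndex_of_isOpen hU).index_ne_zero
  rw [← le_div_iff₀ (by exact_mod_cast Nat.pos_of_ne_zero hU₀)]
  refine csInf_le ⟨-1, ?_⟩ ⟨U, hU, rfl⟩
  rintro _ ⟨V, -, rfl⟩
  rcases V.index.eq_zero_or_pos with h | h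
  · simp [h]
  · have : (1 : ℝ) ≤ V.index := by exact_mod_cast h
    rw [le_div_iff₀ (by positivity)]
    linarith [(topRank V).cast_nonneg (α := ℝ)]

end Topology

section Measure

lemma exists_measure_productSet_conj_ne_zero {G : Type*} [Group G] [MeasurableSpace G]
    [MeasurableMul G] (μ : Measure G) [μ.IsMulLeftInvariant] {n : ℕ}
    {J K : Fin n → Subgroup G} {R : Fin n → Finset G}
    (hcov : ∀ i, (J i : Set G) ⊆ ⋃ c ∈ R i, c • (K i : Set G)) (hμ : μ (productSet J) ≠ 0) :
    ∃ σ : Fin n → G, μ (productSet fun i => MulAut.conj (σ i) • K i) ≠ 0 := by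
  obtain ⟨P, hP⟩ := productSet_subset_iUnion_smul_productSet_conj hcov
  by_contra! h
  refine hμ (measure_mono_null hP ((measure_biUnion_null_iff P.countable_toSet).2 fun p _ => ?_))
  rw [measure_smul]
  exact h p.2

variable {G : Type*} [Group G] [TopologicalSpace G] [IsTopologicalGroup G]
  [MeasurableSpace G] [BorelSpace G]

/-- Steinhaus: `W = W / W` is a neighbourhood of `1`. -/
lemma Subgroup.isOpen_of_measure_ne_zero [LocallyCompactSpace G] (μ : Measure G)
    [μ.IsHaarMeasure] [μ.InnerRegularCompactLTTop] [IsFiniteMeasure μ] {W : Subgroup G}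
    (hW : MeasurableSet (W : Set G)) (hμ : μ W ≠ 0) : IsOpen (W : Set G) := by
  have := Measure.div_mem_nhds_one_of_haar_pos_ne_top μ W hW (pos_iff_ne_zero.2 hμ)
    (measure_ne_top μ _)
  rw [coe_div_coe] at this
  exact W.isOpen_of_mem_nhds this

lemma exists_isOpen_le_topRank_le_sum [CompactSpace G] (μ : Measure G) [μ.IsHaarMeasure]
    {n : ℕ} {M : Subgroup G} [M.Normal] (hM : IsClosed (M : Set G)) {T : Fin n → Finset G}
    (hTM : ∀ i, (Subgroup.closure (T i : Set G)).topologicalClosure ≤ M) (σ : Fin n → G)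
    (hσ : μ (productSet fun i =>
      MulAut.conj (σ i) • (Subgroup.closure (T i : Set G)).topologicalClosure) ≠ 0) :
    ∃ W : Subgroup G, IsOpen (W : Set G) ∧ W ≤ M ∧ topRank W ≤ ∑ i, (T i).card := by
  classical
  set U : Finset G := Finset.univ.biUnion fun i => (T i).image (MulAut.conj (σ i))
  set W := (Subgroup.closure (U : Set G)).topologicalClosure
  have hWc : IsClosed (W : Set G) := Subgroup.isClosed_topologicalClosure _
  have hUW : (U : Set G) ⊆ W := Subgroup.subset_closure.trans (Subgroup.le_topologicalClosure _)
  have hTU : ∀ i, ∀ t ∈ T i, MulAut.conj (σ i) t ∈ U := fun i t ht =>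
    Finset.mem_biUnion.2 ⟨i, Finset.mem_univ _, Finset.mem_image_of_mem _ ht⟩
  have hLW : ∀ i, MulAut.conj (σ i) • (Subgroup.closure (T i : Set G)).topologicalClosure ≤ W := by
    intro i
    have hconj : Continuous (MulAut.conj (σ i)).toMonoidHom :=
      show Continuous fun x => σ i * x * (σ i)⁻¹ by fun_prop
    have hL : (Subgroup.closure (T i : Set G)).topologicalClosure ≤
        W.comap (MulAut.conj (σ i)).toMonoidHom :=
      Subgroup.topologicalClosure_minimal _
        ((Subgroup.closure_le _).2 fun t ht => hUW (hTU i t ht)) (hWc.preimage hconj)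
    intro x hx
    obtain ⟨y, hy, rfl⟩ := (Subgroup.mem_smul_pointwise_iff_exists _ _ _).1 hx
    exact hL hy
  refine ⟨W, W.isOpen_of_measure_ne_zero μ hWc.measurableSet fun h =>
    hσ (measure_mono_null (productSet_subset hLW) h), ?_, ?_⟩
  · refine Subgroup.topologicalClosure_minimal _ ((Subgroup.closure_le M).2 ?_) hM
    intro x hx
    obtain ⟨i, -, hi⟩ := Finset.mem_biUnion.1 hx
    obtain ⟨t, ht, rfl⟩ := Finset.mem_image.1 hi
    have htM : t ∈ M := hTM i (Subgroup.le_topologicalClosure _ (Subgroup.subset_closure ht))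
    exact ‹M.Normal›.conj_mem t htM (σ i)
  · calc topRank W ≤ U.card := topRank_le_card rfl
      _ ≤ ∑ i, ((T i).image (MulAut.conj (σ i))).card := Finset.card_biUnion_le
      _ ≤ ∑ i, (T i).card := Finset.sum_le_sum fun i _ => Finset.card_image_le

end Measure

section Profinite

variable {G : Type*} [Group G] [TopologicalSpace G] [IsTopologicalGroup G] [CompactSpace G]
  [TotallyDisconnectedSpace G]

instance (N : OpenNormalSubgroup G) : (N : Subgroup G).FiniteIndex :=
  Subgroup.finiteIndex_of_isOpen N.toOpenSubgroup.isOpen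

lemma exists_openNormalSubgroup_notMem_sup {H : Subgroup G} (hH : IsClosed (H : Set G))
    {g : G} (hg : g ∉ H) : ∃ N : OpenNormalSubgroup G, g ∉ H ⊔ (N : Subgroup G) := by
  rw [show H = (⟨H, hH⟩ : ClosedSubgroup G) from rfl, ProfiniteGrp.closedSubgroup_eq_sInf_open,
    Subgroup.mem_sInf] at hg
  push Not at hg
  obtain ⟨O, ⟨hO, hHO⟩, hgO⟩ := hg
  obtain ⟨N, hNO⟩ := ProfiniteGrp.exist_openNormalSubgroup_sub_open_nhds_of_one hO O.one_mem
  exact ⟨N, fun hg' => hgO (sup_le hHO hNO hg')⟩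

lemma exists_openNormalSubgroup_index_sup_lt {H : Subgroup G} (hHc : IsClosed (H : Set G))
    (hHo : ¬ IsOpen (H : Set G)) (M : OpenNormalSubgroup G) :
    ∃ N : OpenNormalSubgroup G, (H ⊔ (M : Subgroup G)).index < (H ⊔ (N : Subgroup G)).index := by
  have hHM : H < H ⊔ M := lt_of_le_of_ne le_sup_left fun h =>
    hHo (h ▸ Subgroup.isOpen_mono le_sup_right M.toOpenSubgroup.isOpen)
  obtain ⟨g, hgM, hgH⟩ := SetLike.exists_of_lt hHM
  obtain ⟨N, hgN⟩ := exists_openNormalSubgroup_notMem_sup hHc hgH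
  have : (H ⊔ ((M ⊓ N : OpenNormalSubgroup G) : Subgroup G)).FiniteIndex :=
    Subgroup.finiteIndex_of_le le_sup_right
  refine ⟨M ⊓ N, Subgroup.index_strictAnti (lt_of_le_of_ne ?_ fun h => ?_)⟩
  · exact sup_le_sup_left inf_le_left H
  · exact hgN (sup_le_sup_left inf_le_right H (h ▸ hgM))

lemma exists_openNormalSubgroup_le_index_sup {H : Subgroup G} (hHc : IsClosed (H : Set G))
    (hHo : ¬ IsOpen (H : Set G)) (k : ℕ) :
    ∃ M : OpenNormalSubgroup G, k ≤ (H ⊔ (M : Subgroup G)).index := by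
  induction k with
  | zero => exact ⟨Classical.arbitrary _, Nat.zero_le _⟩
  | succ k ih =>
    obtain ⟨M, hM⟩ := ih
    obtain ⟨N, hN⟩ := exists_openNormalSubgroup_index_sup_lt hHc hHo M
    exact ⟨N, hM.trans_lt hN⟩

lemma exists_openNormalSubgroup_forall_le_index_sup {ι : Type*} [Finite ι] {H : ι → Subgroup G}
    (hHc : ∀ i, IsClosed (H i : Set G)) (hHo : ∀ i, ¬ IsOpen (H i : Set G)) (k : ℕ) :
    ∃ M : OpenNormalSubgroup G, ∀ i, k ≤ (H i ⊔ (M : Subgroup G)).index := by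
  choose M hM using fun i => exists_openNormalSubgroup_le_index_sup (hHc i) (hHo i) k
  obtain ⟨N, hNM⟩ := Finite.exists_ge M
  refine ⟨N, fun i => (hM i).trans ?_⟩
  have := Subgroup.finiteIndex_of_le (le_sup_right : (N : Subgroup G) ≤ H i ⊔ _)
  have hNMi : (N : Subgroup G) ≤ M i := hNM i
  exact Subgroup.index_antitone (sup_le_sup_left hNMi _)

end Profinite

theorem stmt_15_general {Γ : Type*} [Group Γ] [TopologicalSpace Γ] [IsTopologicalGroup Γ]
    [CompactSpace Γ] [TotallyDisconnectedSpace Γ]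
    [MeasurableSpace Γ] [BorelSpace Γ]
    (μ : MeasureTheory.Measure Γ) [μ.IsHaarMeasure]
    (hrg : 0 < topRankGradient Γ)
    (n : ℕ) (H : Fin n → Subgroup Γ)
    (hHc : ∀ i, IsClosed ((H i : Set Γ)))
    (hHfg : ∀ i, TopFG (H i))
    (hHi : ∀ i, ¬ IsOpen ((H i : Set Γ))) :
    μ (productSet H) = 0 := by
  by_contra hμ
  choose S _ hS using hHfg
  obtain ⟨k, hk⟩ := exists_nat_gt ((∑ i, ((S i).card : ℝ)) / topRankGradient Γ)
  obtain ⟨M, hMk⟩ := exists_openNormalSubgroup_forall_le_index_sup hHc hHi k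
  have hMo : IsOpen ((M : Subgroup Γ) : Set Γ) := M.toOpenSubgroup.isOpen
  choose T hT hTS using fun i => exists_finset_topologicalClosure_eq_inf_card_le hMo (hS i)
  choose R hR using fun i => (H i).exists_finset_subset_iUnion_smul_inf M
  obtain ⟨σ, hσ⟩ := exists_measure_productSet_conj_ne_zero μ
    (K := fun i => (Subgroup.closure (T i : Set Γ)).topologicalClosure) (fun i => hT i ▸ hR i) hμ
  obtain ⟨W, hWo, hWM, hWT⟩ := exists_isOpen_le_topRank_le_sum μ
    (M.isClosed_of_isOpen hMo) (fun i => (hT i).trans_le inf_le_right) σ hσ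
  have := Subgroup.finiteIndex_of_isOpen hWo
  have hTk : (∑ i, (T i).card) * k ≤ (∑ i, (S i).card) * M.index := by
    simp only [Finset.sum_mul]
    refine Finset.sum_le_sum fun i _ => ?_
    rw [← Subgroup.relIndex_mul_index_sup (H i), ← mul_assoc, mul_comm (S i).card]
    exact Nat.mul_le_mul (hTS i) (hMk i)
  have hM₀ : (0 : ℝ) < M.index := by
    exact_mod_cast Nat.pos_of_ne_zero Subgroup.FiniteIndex.index_ne_zero
  have hlt : (topRank W : ℝ) * k < k * (topRank W - 1) :=
    calc (topRank W : ℝ) * k ≤ (∑ i, ((S i).card : ℝ)) * M.index := by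
          exact_mod_cast (Nat.mul_le_mul_right k hWT).trans hTk
      _ < k * topRankGradient Γ * M.index := mul_lt_mul_of_pos_right ((div_lt_iff₀ hrg).1 hk) hM₀
      _ ≤ k * topRankGradient Γ * W.index := by gcongr
      _ ≤ k * (topRank W - 1) := by rw [mul_assoc]; gcongr; exact topRankGradient_mul_index_le hWo
  linarith [k.cast_nonneg (α := ℝ)]

theorem stmt_15 {Γ : Type*} [Group Γ] [TopologicalSpace Γ] [IsTopologicalGroup Γ]
    [CompactSpace Γ] [TotallyDisconnectedSpace Γ] [T2Space Γ]
    [MeasurableSpace Γ] [BorelSpace Γ]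
    (μ : MeasureTheory.Measure Γ) [μ.IsHaarMeasure] [MeasureTheory.IsProbabilityMeasure μ]
    (hfg : TopFG (⊤ : Subgroup Γ)) (hrg : 0 < topRankGradient Γ)
    (n : ℕ) (H : Fin n → Subgroup Γ)
    (hHc : ∀ i, IsClosed ((H i : Set Γ)))
    (hHfg : ∀ i, TopFG (H i))
    (hHi : ∀ i, ¬ IsOpen ((H i : Set Γ))) :
    μ (productSet H) = 0 :=
  stmt_15_general μ hrg n H hHc hHfg hHi
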